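/- Let k ≥ 3 be an integer, let p: ℕ → [0,1] satisfy lim_{n→∞} n·p(n) = ∞, and let A > 0. Then lim_{n→∞} P( |X_k − E(X_k)| ≤ A·E(X_k) ) = 1, where X_k is the number of k-cycles of the Erdős–Rényi random graph G ∈ G(n,p(n)). -/

import Mathlib

open SimpleGraph Finset Filter

namespace SEP

/-- The vector `e_i - e_j` in `ℝ^n`. -/
def eVec {n : ℕ} (i j : Fin n) : Fin n → ℝ :=
  fun t => (if t = i then 1 else 0) - (if t = j then 1 else 0)

/-- The symmetric edge polytope of a graph on `Fin n`. -/
def symEdgePolytope {n : ℕ} (G : SimpleGraph (Fin n)) : Set (Fin n → ℝ) :=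
  convexHull ℝ {x | ∃ i j, G.Adj i j ∧ x = eVec i j}

/-- Both darts `a` and `b` are arcs of a common directed cycle of length `m` of `G`. -/
def dartsInCycle {V : Type*} (G : SimpleGraph V) (a b : G.Dart) (m : ℕ) : Prop :=
  ∃ (u : V) (w : G.Walk u u), w.IsCycle ∧ w.length = m ∧ a ∈ w.darts ∧ b ∈ w.darts

/-- `F` is a face of the polytope `P`: the set of maximizers of some linear functional. -/
def IsFaceOfPolytope {n : ℕ} (P F : Set (Fin n → ℝ)) : Prop :=
  ∃ a : Fin n → ℝ,
    F = {x | x ∈ P ∧ ∀ y ∈ P, ∑ t, a t * y t ≤ ∑ t, a t * x t}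

/-- Dimension of (the affine span of) a subset of `ℝ^n`. -/
noncomputable def polyDim {n : ℕ} (s : Set (Fin n → ℝ)) : ℕ :=
  Module.finrank ℝ (vectorSpan ℝ s)

/-- `v` is a vertex of the polytope `P`. -/
def IsVertexOfPolytope {n : ℕ} (P : Set (Fin n → ℝ)) (v : Fin n → ℝ) : Prop :=
  IsFaceOfPolytope P {v}

/-- `F` is an edge (a 1-dimensional face) of the polytope `P`. -/
def IsEdgeOfPolytope {n : ℕ} (P F : Set (Fin n → ℝ)) : Prop :=
  IsFaceOfPolytope P F ∧ polyDim F = 1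

/-- A polytope is simple if every vertex lies on exactly `dim P` edges. -/
def IsSimplePolytope {n : ℕ} (P : Set (Fin n → ℝ)) : Prop :=
  ∀ v, IsVertexOfPolytope P v →
    Set.ncard {F : Set (Fin n → ℝ) | IsEdgeOfPolytope P F ∧ v ∈ F} = polyDim P

/-- Two disjoint edges, on four vertices. -/
def twoDisjointEdges : SimpleGraph (Fin 4) :=
  SimpleGraph.fromEdgeSet {s(0, 1), s(2, 3)}

/-- The cyclomatic number `|E| - |V| + c` of a graph, as an integer. -/
noncomputable def cyc {V : Type*} (G : SimpleGraph V) : ℤ :=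
  (G.edgeSet.ncard : ℤ) + Nat.card G.ConnectedComponent - Nat.card V

/-- A graph is 2-connected: connected, with at least 3 vertices, and deleting any
single vertex leaves it connected. -/
def TwoConnected {V : Type*} (G : SimpleGraph V) : Prop :=
  G.Connected ∧ 3 ≤ Nat.card V ∧ ∀ v : V, (G.induce {u | u ≠ v}).Connected

/-- The subgraph `H` consists of a single edge of `G`. -/
def IsSingleEdge {V : Type*} (G : SimpleGraph V) (H : G.Subgraph) : Prop :=
  ∃ (u v : V) (h : G.Adj u v), H = G.subgraphOfAdj h

/-- `H` is a 2-connected component (block) of `G`: an inclusion-maximal subgraph that is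
2-connected or a single edge. -/
def IsBlock {V : Type*} (G : SimpleGraph V) (H : G.Subgraph) : Prop :=
  (TwoConnected H.coe ∨ IsSingleEdge G H) ∧
    ∀ H' : G.Subgraph, H ≤ H' → (TwoConnected H'.coe ∨ IsSingleEdge G H') → H' = H

/-- A pair of darts (oriented edges) of `G`, with distinct underlying edges, is *bad*
with respect to the order `elt` on edges. -/
def BadPair {V : Type*} (G : SimpleGraph V) (elt : Sym2 V → Sym2 V → Prop)
    (a b : G.Dart) : Prop :=
  a.edge ≠ b.edge ∧
    (dartsInCycle G a b 3 ∨
      ∃ (u : V) (w : G.Walk u u), w.IsCycle ∧ w.length = 4 ∧ a ∈ w.darts ∧ b ∈ w.darts ∧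
        (∃ e ∈ w.edges, elt e a.edge) ∧ (∃ e ∈ w.edges, elt e b.edge))

/-- `n₁(G, <)`: the number of (unordered) bad pairs of oriented edges. -/
noncomputable def n1 {V : Type*} (G : SimpleGraph V) (elt : Sym2 V → Sym2 V → Prop) : ℕ :=
  Set.ncard {z : Sym2 G.Dart | ∃ a b, BadPair G elt a b ∧ z = s(a, b)}

/-- `γ₂(G, <) = 2 cy(G)(cy(G)+2) - n₁(G, <)`. -/
noncomputable def gammaTwo {V : Type*} (G : SimpleGraph V)
    (elt : Sym2 V → Sym2 V → Prop) : ℤ :=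
  2 * cyc G * (cyc G + 2) - (n1 G elt : ℤ)

/-- Restriction of an order on `Sym2 V` to `Sym2 s` for `s : Set V`. -/
def restrictOrd {V : Type*} (elt : Sym2 V → Sym2 V → Prop) (s : Set V) :
    Sym2 s → Sym2 s → Prop :=
  fun e₁ e₂ => elt (e₁.map Subtype.val) (e₂.map Subtype.val)

/-- The graph `G_n` on `Fin n`: vertices `0` and `1` are adjacent to everything. -/
def GnGraph (n : ℕ) : SimpleGraph (Fin n) :=
  SimpleGraph.fromRel (fun a _ => a.val < 2)

/-- The complete bipartite graph `K_{2, n-2}` on `Fin n`, with parts `{0,1}` and the rest. -/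
def K2Graph (n : ℕ) : SimpleGraph (Fin n) :=
  SimpleGraph.fromRel (fun a b => a.val < 2 ∧ 2 ≤ b.val)

/-- A set `S` of darts of `G` is a face of the triangulation `Δ_<` of `∂P_G`. -/
def IsFace {V : Type*} (G : SimpleGraph V) (elt : Sym2 V → Sym2 V → Prop)
    (S : Set G.Dart) : Prop :=
  (¬ ∃ d ∈ S, d.symm ∈ S) ∧
    ∀ ℓ : ℕ, 2 ≤ ℓ → ∀ (u : V) (w : G.Walk u u), w.IsCycle →
      (w.length = 2 * ℓ - 1 → Set.ncard {d ∈ S | d ∈ w.darts} < ℓ) ∧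
      (w.length = 2 * ℓ →
        Set.ncard {d ∈ S | d ∈ w.darts ∧ ∃ e ∈ w.edges, elt e d.edge} < ℓ)

/-- The face complex `Δ_<` of `(G, <)`. -/
def faceCx {V : Type*} (G : SimpleGraph V) (elt : Sym2 V → Sym2 V → Prop) :
    Set (Set G.Dart) :=
  {S | IsFace G elt S}

/-- The join of two simplicial complexes (given as families of faces on disjoint
vertex types). -/
def joinCx {A B : Type*} (F : Set (Set A)) (H : Set (Set B)) : Set (Set (A ⊕ B)) :=
  {S | ∃ F₁ ∈ F, ∃ H₁ ∈ H, S = Sum.inl '' F₁ ∪ Sum.inr '' H₁}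

/-- The complex consisting of two disjoint vertices. -/
def twoPtCx : Set (Set (Fin 2)) :=
  {S | S = ∅ ∨ S = {0} ∨ S = {1}}

/-- Contraction of the edge `{v, w}` of a simplicial complex; `v` is identified with `w`. -/
def contractCx {A : Type*} (F : Set (Set A)) (v w : A) : Set (Set A) :=
  {S | (S ∈ F ∧ v ∉ S) ∨ ∃ H ∈ F, v ∈ H ∧ S = (H \ {v}) ∪ {w}}

/-- Isomorphism of simplicial complexes: a bijection of vertex sets inducing a bijection
of faces. -/
def CxIso {A B : Type*} (F : Set (Set A)) (H : Set (Set B)) : Prop :=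
  ∃ φ : A → B, Set.BijOn φ (⋃₀ F) (⋃₀ H) ∧
    (∀ S ∈ F, φ '' S ∈ H) ∧ (∀ T ∈ H, ∃ S ∈ F, φ '' S = T)

/-! ### Erdős–Rényi random graphs -/

/-- The probability weight of a fixed graph `G` in the Erdős–Rényi model `G(n,p)`. -/
noncomputable def graphWeight (n : ℕ) (p : ℝ) (G : SimpleGraph (Fin n)) : ℝ :=
  p ^ G.edgeSet.ncard * (1 - p) ^ (n.choose 2 - G.edgeSet.ncard)

/-- The probability of an event `A` in the Erdős–Rényi model `G(n,p)`. -/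
noncomputable def erProb (n : ℕ) (p : ℝ) (A : Set (SimpleGraph (Fin n))) : ℝ :=
  ∑ G : SimpleGraph (Fin n), A.indicator (graphWeight n p) G

/-- The expectation of a random variable in the Erdős–Rényi model `G(n,p)`. -/
noncomputable def erExp (n : ℕ) (p : ℝ) (X : SimpleGraph (Fin n) → ℝ) : ℝ :=
  ∑ G : SimpleGraph (Fin n), graphWeight n p G * X G

/-- The variance of a random variable in the Erdős–Rényi model `G(n,p)`. -/
noncomputable def erVar (n : ℕ) (p : ℝ) (X : SimpleGraph (Fin n) → ℝ) : ℝ :=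
  erExp n p (fun G => (X G - erExp n p X) ^ 2)

/-- The number of cycles of `G` with exactly `k` vertices, counted via their edge sets. -/
noncomputable def numCycles {V : Type*} (G : SimpleGraph V) (k : ℕ) : ℕ :=
  Set.ncard {s : Set (Sym2 V) |
    ∃ (u : V) (w : G.Walk u u), w.IsCycle ∧ w.length = k ∧ s = {e | e ∈ w.edges}}

/-- `E(X_k) = C(n,k)·((k−1)!/2)·p^k`, the expected number of `k`-cycles. -/
noncomputable def expCycles (n : ℕ) (p : ℝ) (k : ℕ) : ℝ :=
  (n.choose k : ℝ) * ((Nat.factorial (k - 1) : ℝ) / 2) * p ^ k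

/-- `E(X_E) = C(n,2)·p`, the expected number of edges. -/
noncomputable def expEdges (n : ℕ) (p : ℝ) : ℝ :=
  (n.choose 2 : ℝ) * p

/-- `n_{k-1}(G)`: the number of `k`-element non-faces of `Δ_<` containing no antipodal
pair. -/
noncomputable def numNonFaces {V : Type*} (G : SimpleGraph V)
    (elt : Sym2 V → Sym2 V → Prop) (k : ℕ) : ℕ :=
  Set.ncard {S : Set G.Dart |
    S.ncard = k ∧ (¬ ∃ d ∈ S, d.symm ∈ S) ∧ ¬ IsFace G elt S}

/-- `f_{k-1}(G)`: the number of `k`-element faces of `Δ_<`. -/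
noncomputable def numFaces {V : Type*} (G : SimpleGraph V)
    (elt : Sym2 V → Sym2 V → Prop) (k : ℕ) : ℕ :=
  Set.ncard {S : Set G.Dart | S.ncard = k ∧ IsFace G elt S}

/-- The generalized binomial coefficient `binom(x, ℓ)` for real `x`. -/
noncomputable def realChoose (x : ℝ) (ℓ : ℕ) : ℝ :=
  (∏ i ∈ Finset.range ℓ, (x - i)) / (Nat.factorial ℓ)

/-- The recursively defined γ-numbers `γ_ℓ(G)`:
`γ_0 = 1` and
`γ_ℓ = f_{ℓ−1} − [t^{n−1−ℓ}] ∑_{i<ℓ} γ_i (t+1)^i (t+2)^{n−1−2i}`. -/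
noncomputable def gammaRG (n : ℕ) (G : SimpleGraph (Fin n))
    (elt : Sym2 (Fin n) → Sym2 (Fin n) → Prop) : ℕ → ℤ := fun ℓ =>
  Nat.strongRecOn ℓ (fun ℓ ih =>
    if ℓ = 0 then (1 : ℤ)
    else
      (numFaces G elt ℓ : ℤ) -
        Polynomial.coeff
          (∑ i ∈ (Finset.range ℓ).attach,
            Polynomial.C (ih i.1 (Finset.mem_range.mp i.2)) *
              ((Polynomial.X + 1) ^ (i.1 : ℕ) *
                (Polynomial.X + 2) ^ (n - 1 - 2 * i.1) : Polynomial ℤ))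
          (n - 1 - ℓ))



section Aux
open scoped Classical

noncomputable def chi (P : Prop) : ℝ := if P then 1 else 0

lemma chi_of {P : Prop} (h : P) : chi P = 1 := if_pos h
lemma chi_of_not {P : Prop} (h : ¬ P) : chi P = 0 := if_neg h
lemma chi_nonneg (P : Prop) : 0 ≤ chi P := by unfold chi; split <;> norm_num
lemma chi_le_one (P : Prop) : chi P ≤ 1 := by unfold chi; split <;> norm_num
lemma chi_mul_chi (P Q : Prop) : chi P * chi Q = chi (P ∧ Q) := by
  unfold chi; by_cases hP : P <;> by_cases hQ : Q <;> simp [hP, hQ]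

lemma graphWeight_nonneg {n : ℕ} {p : ℝ} (hp0 : 0 ≤ p) (hp1 : p ≤ 1)
    (G : SimpleGraph (Fin n)) : 0 ≤ graphWeight n p G := by
  exact mul_nonneg (pow_nonneg hp0 _) (pow_nonneg (by linarith) _)

/-- The equivalence between graphs on `Fin n` and subsets of the top edge set. -/
noncomputable def graphEquiv (n : ℕ) :
    SimpleGraph (Fin n) ≃ {t : Finset (Sym2 (Fin n)) // t ⊆ (⊤ : SimpleGraph (Fin n)).edgeFinset} where
  toFun G := ⟨G.edgeFinset, by
    intro e he
    rw [mem_edgeFinset] at he ⊢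
    exact edgeSet_mono le_top he⟩
  invFun t := SimpleGraph.fromEdgeSet ↑t.1
  left_inv G := by
    simp [SimpleGraph.coe_edgeFinset, SimpleGraph.fromEdgeSet_edgeSet]
  right_inv t := by
    ext e
    simp only [mem_edgeFinset, SimpleGraph.edgeSet_fromEdgeSet, Set.mem_diff,
      Finset.mem_coe, Set.mem_setOf_eq]
    constructor
    · rintro ⟨he, -⟩; exact he
    · intro he
      refine ⟨he, ?_⟩
      have := t.2 he
      rw [mem_edgeFinset, edgeSet_top] at this
      exact this

lemma card_topEdges (n : ℕ) : (⊤ : SimpleGraph (Fin n)).edgeFinset.card = n.choose 2 := by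
  rw [card_edgeFinset_top_eq_card_choose_two, Fintype.card_fin]

lemma edgeSet_ncard_eq {n : ℕ} (t : Finset (Sym2 (Fin n)))
    (ht : t ⊆ (⊤ : SimpleGraph (Fin n)).edgeFinset) :
    (SimpleGraph.fromEdgeSet (↑t : Set (Sym2 (Fin n)))).edgeSet.ncard = t.card := by
  have h : (SimpleGraph.fromEdgeSet (↑t : Set (Sym2 (Fin n)))).edgeSet = ↑t := by
    rw [SimpleGraph.edgeSet_fromEdgeSet]
    ext e
    simp only [Set.mem_diff, Finset.mem_coe, Set.mem_setOf_eq, and_iff_left_iff_imp]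
    intro he
    have := ht he
    rw [mem_edgeFinset, edgeSet_top] at this
    exact this
  rw [h, Set.ncard_coe_finset]

/-- The key cylinder-set probability computation. -/
lemma sum_weight_cyl {n : ℕ} (p : ℝ) (s : Finset (Sym2 (Fin n)))
    (hs : s ⊆ (⊤ : SimpleGraph (Fin n)).edgeFinset) :
    ∑ G : SimpleGraph (Fin n), graphWeight n p G * chi ((↑s : Set (Sym2 (Fin n))) ⊆ G.edgeSet)
      = p ^ s.card := by
  set E := (⊤ : SimpleGraph (Fin n)).edgeFinset with hE
  -- reindex the sum by subsets of E
  rw [← Equiv.sum_comp (graphEquiv n).symm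
    (fun G => graphWeight n p G * chi ((↑s : Set (Sym2 (Fin n))) ⊆ G.edgeSet))]
  have hsum : ∀ t : {t : Finset (Sym2 (Fin n)) // t ⊆ E},
      graphWeight n p ((graphEquiv n).symm t) * chi ((↑s : Set (Sym2 (Fin n))) ⊆ ((graphEquiv n).symm t).edgeSet)
        = p ^ (t:Finset (Sym2 (Fin n))).card * (1-p) ^ (n.choose 2 - (t:Finset (Sym2 (Fin n))).card) * chi (s ⊆ (t:Finset (Sym2 (Fin n)))) := by
    intro t
    have hed : ((graphEquiv n).symm t).edgeSet = ↑t.1 := by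
      have h : (SimpleGraph.fromEdgeSet (↑t.1 : Set (Sym2 (Fin n)))).edgeSet = ↑t.1 := by
        rw [SimpleGraph.edgeSet_fromEdgeSet]
        ext e
        simp only [Set.mem_diff, Finset.mem_coe, Set.mem_setOf_eq, and_iff_left_iff_imp]
        intro he
        have := t.2 he
        rw [mem_edgeFinset, edgeSet_top] at this
        exact this
      exact h
    rw [graphWeight, hed, Set.ncard_coe_finset]
    congr 1
  rw [Finset.sum_congr rfl (fun t _ => hsum t)]
  -- now a sum over the subtype; convert to sum over powerset
  rw [← Finset.sum_subtype (E.powerset) (fun t => Finset.mem_powerset) 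
    (fun t => p ^ t.card * (1-p) ^ (n.choose 2 - t.card) * chi (s ⊆ t))]
  -- kill terms without s ⊆ t
  have hchi : ∀ t : Finset (Sym2 (Fin n)), p ^ t.card * (1-p) ^ (n.choose 2 - t.card) * chi (s ⊆ t)
      = if s ⊆ t then p ^ t.card * (1-p) ^ (n.choose 2 - t.card) else 0 := by
    intro t; unfold chi; split <;> simp
  rw [Finset.sum_congr rfl (fun t _ => hchi t), ← Finset.sum_filter]
  -- reindex by u = t \ s
  rw [Finset.sum_nbij' (i := fun t => t \ s) (j := fun u => s ∪ u)
    (t := (E \ s).powerset)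
    (g := fun u => p ^ (s.card + u.card) * (1-p) ^ ((E \ s).card - u.card))]
  · -- final computation
    have := Finset.prod_add (fun _ : Sym2 (Fin n) => p) (fun _ => 1 - p) (E \ s)
    simp only [Finset.prod_const] at this
    have h1 : (1:ℝ) = ∑ u ∈ (E \ s).powerset, p ^ u.card * (1-p) ^ ((E \ s) \ u).card := by
      have h2 := Finset.prod_add (fun _ : Sym2 (Fin n) => p) (fun _ => 1 - p) (E \ s)
      simp only [Finset.prod_const] at h2
      calc (1:ℝ) = (p + (1-p)) ^ (E \ s).card := by norm_num
        _ = _ := h2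
    calc ∑ u ∈ (E \ s).powerset, p ^ (s.card + u.card) * (1-p) ^ ((E \ s).card - u.card)
        = p ^ s.card * ∑ u ∈ (E \ s).powerset, p ^ u.card * (1-p) ^ ((E \ s) \ u).card := by
          rw [Finset.mul_sum]
          apply Finset.sum_congr rfl
          intro u hu
          rw [Finset.mem_powerset] at hu
          rw [Finset.card_sdiff_of_subset hu, pow_add]
          ring
      _ = p ^ s.card := by rw [← h1, mul_one]
  · intro t ht
    simp only [Finset.mem_filter, Finset.mem_powerset] at ht
    exact Finset.mem_powerset.mpr (Finset.sdiff_subset_sdiff ht.1 le_rfl)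
  · intro u hu
    simp only [Finset.mem_powerset] at hu
    simp only [Finset.mem_filter, Finset.mem_powerset]
    exact ⟨Finset.union_subset hs (hu.trans (Finset.sdiff_subset)), Finset.subset_union_left⟩
  · intro t ht
    simp only [Finset.mem_filter, Finset.mem_powerset] at ht
    exact Finset.union_sdiff_of_subset ht.2
  · intro u hu
    simp only [Finset.mem_powerset] at hu
    have hd : Disjoint s u := (Finset.sdiff_disjoint.mono_left hu).symm
    exact Finset.union_sdiff_cancel_left hd
  · intro t ht
    simp only [Finset.mem_filter, Finset.mem_powerset] at ht
    have h1 : (t \ s).card = t.card - s.card := Finset.card_sdiff_of_subset ht.2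
    have h2 : s.card ≤ t.card := Finset.card_le_card ht.2
    have h3 : t.card ≤ E.card := Finset.card_le_card ht.1
    have h4 : s.card ≤ E.card := Finset.card_le_card hs
    have h5 : (E \ s).card = E.card - s.card := Finset.card_sdiff_of_subset hs
    have hC : E.card = n.choose 2 := card_topEdges n
    have e1 : s.card + (t \ s).card = t.card := by omega
    have e2 : n.choose 2 - t.card = (E \ s).card - (t \ s).card := by omega
    rw [e1, e2]


variable {k : ℕ} {V : Type*}

/-- The cyclic edge set of a tuple. -/
noncomputable def Ef [NeZero k] [DecidableEq V] (f : ZMod k → V) : Finset (Sym2 V) :=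
  Finset.image (fun i => s(f i, f (i+1))) Finset.univ

lemma two_ne_zero' (hk : 3 ≤ k) : (2 : ZMod k) ≠ 0 := by
  have : ((2:ℕ) : ZMod k) = (2 : ZMod k) := by push_cast; ring
  rw [← this, Ne, ZMod.natCast_eq_zero_iff]
  intro hdvd
  have := Nat.le_of_dvd (by norm_num) hdvd
  omega

lemma zmod_cast_self_add {i : ZMod k} (hk : 3 ≤ k) : i + 2 ≠ i := by
  intro h
  have : (2 : ZMod k) = 0 := by
    have := congrArg (fun x => x - i) h
    simpa [add_comm, add_sub_cancel] using this
  exact two_ne_zero' hk this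

lemma edgeMap_injective [NeZero k] (hk : 3 ≤ k) {f : ZMod k → V}
    (hf : Function.Injective f) :
    Function.Injective (fun i : ZMod k => s(f i, f (i+1))) := by
  intro a b hab
  simp only [Sym2.eq_iff] at hab
  rcases hab with ⟨h1, _⟩ | ⟨h1, h2⟩
  · exact hf h1
  · -- a = b + 1 and a + 1 = b : then b + 2 = b
    have ha : a = b + 1 := hf h1
    have hb : b = a + 1 := (hf h2).symm
    rw [ha] at hb
    exfalso
    exact zmod_cast_self_add (i := b) hk (by linear_combination -hb)

lemma card_Ef [NeZero k] [DecidableEq V] (hk : 3 ≤ k) {f : ZMod k → V}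
    (hf : Function.Injective f) : (Ef f).card = k := by
  rw [Ef, Finset.card_image_of_injective _ (edgeMap_injective hk hf), Finset.card_univ,
    ZMod.card]

lemma mem_Ef [NeZero k] [DecidableEq V] {f : ZMod k → V} {e : Sym2 V} :
    e ∈ Ef f ↔ ∃ i, e = s(f i, f (i+1)) := by
  simp [Ef, eq_comm]

lemma Ef_nondiag [NeZero k] (hk : 3 ≤ k) [DecidableEq V] {f : ZMod k → V}
    (hf : Function.Injective f) {e : Sym2 V} (he : e ∈ Ef f) : ¬ e.IsDiag := by
  rw [mem_Ef] at he
  obtain ⟨i, rfl⟩ := he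
  rw [Sym2.isDiag_iff_proj_eq]
  intro h
  have : i = i + 1 := hf h
  exact zmod_cast_self_add (i := i) hk (by linear_combination (-2 : ZMod k) * this)

/-- Rigidity: a cyclic tuple is determined by its edge set together
with its first two values. -/
lemma rigidity [NeZero k] [DecidableEq V] (hk : 3 ≤ k) {g h : ZMod k → V}
    (hg : Function.Injective g) (hh : Function.Injective h)
    (hE : Ef g = Ef h) (h0 : g 0 = h 0) (h1 : g 1 = h 1) : g = h := by
  have step : ∀ i : ZMod k, g i = h i → g (i+1) = h (i+1) → g (i+2) = h (i+2) := by
    intro i hi hi1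
    have hmem : s(g (i+1), g (i+2)) ∈ Ef h := by
      rw [← hE, mem_Ef]
      exact ⟨i+1, by ring_nf⟩
    rw [mem_Ef] at hmem
    obtain ⟨j, hj⟩ := hmem
    rw [Sym2.eq_iff] at hj
    rcases hj with ⟨ha, hb⟩ | ⟨ha, hb⟩
    · have : j = i + 1 := hh (by rw [← ha, hi1])
      rw [hb, this]; ring_nf
    · have hji : j = i := by
        have : j + 1 = i + 1 := hh (by rw [← ha, hi1])
        linear_combination this
      rw [hji] at hb
      rw [← hi] at hb
      exact absurd (hg hb.symm).symm (zmod_cast_self_add hk)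
  have main : ∀ m : ℕ, g (m : ZMod k) = h (m : ZMod k) ∧ g ((m : ZMod k)+1) = h ((m : ZMod k)+1) := by
    intro m
    induction m with
    | zero => exact ⟨by simpa using h0, by simpa using h1⟩
    | succ m ih =>
      have h2 := step (m : ZMod k) ih.1 ih.2
      constructor
      · push_cast; simpa using ih.2
      · push_cast
        have : ((m:ZMod k) + 1 + 1) = (m : ZMod k) + 2 := by ring
        rw [this]
        exact h2
  funext i
  have := (main i.val).1
  rwa [ZMod.natCast_zmod_val] at this
  
noncomputable def rotT (f : ZMod k → V) (r : ZMod k) : ZMod k → V := fun i => f (r + i)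
noncomputable def reflT (f : ZMod k → V) (r : ZMod k) : ZMod k → V := fun i => f (r - i)

lemma rotT_injective {f : ZMod k → V} (hf : Function.Injective f) (r : ZMod k) :
    Function.Injective (rotT f r) := fun a b hab => by
  have := hf hab
  exact by linear_combination this

lemma reflT_injective {f : ZMod k → V} (hf : Function.Injective f) (r : ZMod k) :
    Function.Injective (reflT f r) := fun a b hab => by
  have := hf hab
  exact by linear_combination -this

lemma Ef_rotT [NeZero k] [DecidableEq V] (f : ZMod k → V) (r : ZMod k) :
    Ef (rotT f r) = Ef f := by
  apply Finset.ext; intro e; rw [mem_Ef, mem_Ef]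
  constructor
  · rintro ⟨i, rfl⟩
    exact ⟨r + i, by rw [rotT, rotT, show r + (i+1) = (r+i)+1 by ring]⟩
  · rintro ⟨i, rfl⟩
    exact ⟨i - r, by rw [rotT, rotT, show r + (i - r) = i by ring, show r + (i - r + 1) = i + 1 by ring]⟩

lemma Ef_reflT [NeZero k] [DecidableEq V] (f : ZMod k → V) (r : ZMod k) :
    Ef (reflT f r) = Ef f := by
  apply Finset.ext; intro e; rw [mem_Ef, mem_Ef]
  constructor
  · rintro ⟨i, rfl⟩
    refine ⟨r - i - 1, ?_⟩
    rw [reflT, reflT, show r - i - 1 + 1 = r - i by ring, show r - (i+1) = r - i - 1 by ring,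
      Sym2.eq_swap]
  · rintro ⟨i, rfl⟩
    refine ⟨r - i - 1, ?_⟩
    rw [reflT, reflT, show r - (r - i - 1) = i + 1 by ring, show r - (r - i - 1 + 1) = i by ring,
      Sym2.eq_swap]

variable [Fintype V]

/-- The set of injective cyclic tuples all of whose consecutive pairs are adjacent. -/
noncomputable def tupleSet (k : ℕ) [NeZero k] (G : SimpleGraph V) : Finset (ZMod k → V) :=
  Finset.univ.filter (fun f => Function.Injective f ∧ ∀ i, G.Adj (f i) (f (i+1)))

lemma mem_tupleSet [NeZero k] {G : SimpleGraph V} {f : ZMod k → V} :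
    f ∈ tupleSet k G ↔ Function.Injective f ∧ ∀ i, G.Adj (f i) (f (i+1)) := by
  simp [tupleSet]

lemma adj_of_sym2_eq {G : SimpleGraph V} {a b c d : V} (h : s(a,b) = s(c,d))
    (hcd : G.Adj c d) : G.Adj a b := by
  rw [Sym2.eq_iff] at h
  rcases h with ⟨rfl, rfl⟩ | ⟨rfl, rfl⟩
  · exact hcd
  · exact hcd.symm

lemma mem_tupleSet_of_Ef [NeZero k] [DecidableEq V] {G : SimpleGraph V}
    {f₀ g : ZMod k → V} (hf₀ : f₀ ∈ tupleSet k G) (hg : Function.Injective g)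
    (hE : Ef g = Ef f₀) : g ∈ tupleSet k G := by
  rw [mem_tupleSet] at hf₀ ⊢
  refine ⟨hg, fun i => ?_⟩
  have : s(g i, g (i+1)) ∈ Ef f₀ := by rw [← hE, mem_Ef]; exact ⟨i, rfl⟩
  rw [mem_Ef] at this
  obtain ⟨j, hj⟩ := this
  exact adj_of_sym2_eq hj (hf₀.2 j)

lemma rotT_mem [NeZero k] [DecidableEq V] {G : SimpleGraph V} {f₀ : ZMod k → V}
    (hf₀ : f₀ ∈ tupleSet k G) (r : ZMod k) : rotT f₀ r ∈ tupleSet k G :=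
  mem_tupleSet_of_Ef hf₀ (rotT_injective (mem_tupleSet.mp hf₀).1 r) (Ef_rotT f₀ r)

lemma reflT_mem [NeZero k] [DecidableEq V] {G : SimpleGraph V} {f₀ : ZMod k → V}
    (hf₀ : f₀ ∈ tupleSet k G) (r : ZMod k) : reflT f₀ r ∈ tupleSet k G :=
  mem_tupleSet_of_Ef hf₀ (reflT_injective (mem_tupleSet.mp hf₀).1 r) (Ef_reflT f₀ r)

/-- Each edge set of a cycle-tuple occurs for exactly `2k` tuples. -/
lemma card_fiber [NeZero k] [DecidableEq V] (hk : 3 ≤ k) {G : SimpleGraph V}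
    {f₀ : ZMod k → V} (hf₀ : f₀ ∈ tupleSet k G) :
    ((tupleSet k G).filter (fun g => Ef g = Ef f₀)).card = 2 * k := by
  have hinj₀ : Function.Injective f₀ := (mem_tupleSet.mp hf₀).1
  have h2 : (2 : ZMod k) ≠ 0 := two_ne_zero' hk
  have hcard : (Finset.univ : Finset (ZMod k × Bool)).card = 2 * k := by
    simp [Fintype.card_prod, ZMod.card, mul_comm]
  rw [← hcard]
  apply (Finset.card_bij (fun x _ => if x.2 then reflT f₀ x.1 else rotT f₀ x.1) ?_ ?_ ?_).symm
  · rintro ⟨r, ε⟩ -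
    simp only [Finset.mem_filter]
    cases ε
    · simpa using ⟨rotT_mem hf₀ r, Ef_rotT f₀ r⟩
    · simpa using ⟨reflT_mem hf₀ r, Ef_reflT f₀ r⟩
  · rintro ⟨r, ε⟩ hm1 ⟨r', ε'⟩ hm2 hval
    have h0 := congrFun hval 0
    have h1 := congrFun hval 1
    cases ε <;> cases ε' <;>
      simp only [rotT, reflT, if_true, if_false, Bool.false_eq_true] at h0 h1 ⊢
    · have hr : r = r' := by have := hinj₀ (by simpa using h0); linear_combination this
      simp [hr]
    · exfalso
      have hr : r = r' := by have := hinj₀ (by simpa using h0); linear_combination this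
      have := hinj₀ (by simpa [hr] using h1)
      apply h2; linear_combination this
    · exfalso
      have hr : r = r' := by have := hinj₀ (by simpa using h0); linear_combination this
      have := hinj₀ (by simpa [hr] using h1)
      apply h2; linear_combination -this
    · have hr : r = r' := by have := hinj₀ (by simpa using h0); linear_combination this
      simp [hr]
  · intro g hgmem
    simp only [Finset.mem_filter] at hgmem
    obtain ⟨hgT, hgE⟩ := hgmem
    have hginj : Function.Injective g := (mem_tupleSet.mp hgT).1
    have h01 : s(g 0, g 1) ∈ Ef f₀ := by rw [← hgE, mem_Ef]; exact ⟨0, by norm_num⟩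
    rw [mem_Ef] at h01
    obtain ⟨j, hj⟩ := h01
    rw [Sym2.eq_iff] at hj
    rcases hj with ⟨ha, hb⟩ | ⟨ha, hb⟩
    · refine ⟨(j, false), Finset.mem_univ _, ?_⟩
      simp only [if_false, Bool.false_eq_true]
      refine (rigidity hk hginj (rotT_injective hinj₀ j) ?_ ?_ ?_).symm
      · rw [hgE, Ef_rotT]
      · rw [rotT]; simpa using ha
      · rw [rotT]; exact hb
    · refine ⟨(j+1, true), Finset.mem_univ _, ?_⟩
      simp only [if_true]
      refine (rigidity hk hginj (reflT_injective hinj₀ (j+1)) ?_ ?_ ?_).symm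
      · rw [hgE, Ef_reflT]
      · rw [reflT]; simpa using ha
      · rw [reflT, show j + 1 - 1 = j by ring]; exact hb

/-- The number of tuples is `2k` times the number of cycle edge sets. -/
lemma card_tupleSet_eq [NeZero k] [DecidableEq V] (hk : 3 ≤ k) (G : SimpleGraph V) :
    (tupleSet k G).card = 2 * k * ((tupleSet k G).image Ef).card := by
  rw [Finset.card_eq_sum_card_fiberwise (f := Ef) (t := (tupleSet k G).image Ef)
    (fun f hf => Finset.mem_image_of_mem Ef hf)]
  rw [Finset.sum_congr rfl (fun s hs => ?_), Finset.sum_const, smul_eq_mul, mul_comm]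
  obtain ⟨f₀, hf₀, rfl⟩ := Finset.mem_image.mp hs
  exact card_fiber hk hf₀

/-! ### Walks and tuples -/

section Walks

variable {G : SimpleGraph V}

open SimpleGraph.Walk

/-- Build a walk from a vertex sequence. -/
noncomputable def buildWalk (G : SimpleGraph V) (f : ℕ → V) :
    (i : ℕ) → (∀ j, j < i → G.Adj (f j) (f (j+1))) → G.Walk (f 0) (f i)
  | 0, _ => SimpleGraph.Walk.nil
  | (i+1), h => (buildWalk G f i (fun j hj => h j (by omega))).concat (h i (by omega))

omit [Fintype V] in
lemma buildWalk_support (f : ℕ → V) (i : ℕ) (h : ∀ j, j < i → G.Adj (f j) (f (j+1))) :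
    (buildWalk G f i h).support = (List.range (i+1)).map f := by
  induction i with
  | zero => simp [buildWalk, List.range_succ]
  | succ i ih =>
    rw [buildWalk, support_concat, ih, List.range_succ (n := i+1), List.map_append]
    simp

omit [Fintype V] in
lemma buildWalk_edges (f : ℕ → V) (i : ℕ) (h : ∀ j, j < i → G.Adj (f j) (f (j+1))) :
    (buildWalk G f i h).edges = (List.range i).map (fun j => s(f j, f (j+1))) := by
  induction i with
  | zero => simp [buildWalk]
  | succ i ih =>
    rw [buildWalk, edges_concat, ih, List.range_succ (n := i), List.map_append]
    simp

omit [Fintype V] in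
lemma buildWalk_length (f : ℕ → V) (i : ℕ) (h : ∀ j, j < i → G.Adj (f j) (f (j+1))) :
    (buildWalk G f i h).length = i := by
  induction i with
  | zero => rfl
  | succ i ih => rw [buildWalk, length_concat, ih]

omit [Fintype V] in
lemma walk_edges_eq {u v : V} (w : G.Walk u v) :
    w.edges = (List.range w.length).map (fun i => s(w.getVert i, w.getVert (i+1))) := by
  induction w with
  | nil => simp
  | cons hadj p ih =>
    rw [edges_cons, ih, length_cons, List.range_succ_eq_map, List.map_cons, List.map_map]
    congr 1
    simp [getVert_cons_succ, getVert_zero]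

omit [Fintype V] in
lemma walk_support_eq {u v : V} (w : G.Walk u v) :
    w.support = (List.range (w.length+1)).map w.getVert := by
  induction w with
  | nil => simp [List.range_succ]
  | cons hadj p ih =>
    rw [support_cons, ih, length_cons, List.range_succ_eq_map (n := p.length + 1),
      List.map_cons, List.map_map]
    congr 1

omit [Fintype V] in
lemma exists_tuple_of_cycle [NeZero k] [DecidableEq V] (hk : 3 ≤ k) {u : V} {w : G.Walk u u}
    (hc : w.IsCycle) (hl : w.length = k) :
    ∃ f : ZMod k → V, (Function.Injective f ∧ ∀ i, G.Adj (f i) (f (i+1))) ∧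
      {e | e ∈ w.edges} = ↑(Ef f) := by
  have hk0 : 0 < k := by omega
  have hgk : w.getVert k = w.getVert 0 := by
    rw [← hl, getVert_length, getVert_zero]
  -- injectivity on [1, k]
  have htail : w.support.tail = (List.range k).map (fun a => w.getVert (a+1)) := by
    rw [walk_support_eq, hl, List.range_succ_eq_map, List.map_cons, List.tail_cons, List.map_map]
    rfl
  have hnd : ((List.range k).map (fun a => w.getVert (a+1))).Nodup := by
    rw [← htail]; exact hc.support_nodup
  have hinj1 : ∀ a ∈ List.range k, ∀ b ∈ List.range k,
      w.getVert (a+1) = w.getVert (b+1) → a = b :=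
    List.inj_on_of_nodup_map hnd
  set f : ZMod k → V := fun i => w.getVert i.val with hf
  have hval : ∀ i : ZMod k, i.val < k := fun i => ZMod.val_lt i
  have hsh : ∀ a : ℕ, a < k → w.getVert a = w.getVert ((if a = 0 then k-1 else a-1) + 1) := by
    intro a ha
    rcases Nat.eq_zero_or_pos a with rfl | hpos
    · rw [if_pos rfl, show k-1+1 = k by omega, hgk]
    · rw [if_neg (by omega), show a-1+1 = a by omega]
  have hfinj : Function.Injective f := by
    intro i j hij
    rw [hf] at hij
    simp only at hij
    rw [hsh i.val (hval i), hsh j.val (hval j)] at hij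
    have := hinj1 _ (List.mem_range.mpr (by have := hval i; split <;> omega)) _
      (List.mem_range.mpr (by have := hval j; split <;> omega)) hij
    have hv : i.val = j.val := by
      have hvi := hval i; have hvj := hval j
      split_ifs at this <;> omega
    exact ZMod.val_injective _ hv
  have hgetmod : ∀ a : ℕ, a < k → w.getVert ((a+1) % k) = w.getVert (a+1) := by
    intro a ha
    rcases Nat.lt_or_ge (a+1) k with h | h
    · rw [Nat.mod_eq_of_lt h]
    · have : a + 1 = k := by omega
      rw [this, Nat.mod_self, ← hgk]
  have hadj : ∀ i : ZMod k, G.Adj (f i) (f (i+1)) := by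
    intro i
    have h1 : (i+1).val = (i.val + 1) % k := by
      rw [ZMod.val_add, ZMod.val_one_eq_one_mod]
      congr 1
      rw [Nat.mod_eq_of_lt (by omega)]
    rw [hf]
    simp only
    rw [h1, hgetmod i.val (hval i)]
    apply w.adj_getVert_succ
    rw [hl]
    exact hval i
  refine ⟨f, ⟨hfinj, hadj⟩, ?_⟩
  ext e
  simp only [Set.mem_setOf_eq, Finset.coe_sort_coe, Finset.mem_coe, mem_Ef]
  rw [walk_edges_eq, List.mem_map]
  constructor
  · rintro ⟨a, ha, rfl⟩
    rw [List.mem_range, hl] at ha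
    refine ⟨(a : ZMod k), ?_⟩
    rw [hf]
    simp only
    have h1 : ((a : ZMod k)).val = a := ZMod.val_cast_of_lt ha
    have h2 : ((a : ZMod k) + 1).val = (a + 1) % k := by
      rw [ZMod.val_add, ZMod.val_one_eq_one_mod, h1]
      congr 1
      rw [Nat.mod_eq_of_lt (by omega)]
    rw [h1, h2, hgetmod a ha]
  · rintro ⟨i, rfl⟩
    refine ⟨i.val, by rw [List.mem_range, hl]; exact hval i, ?_⟩
    rw [hf]
    simp only
    have h2 : (i + 1).val = (i.val + 1) % k := by
      rw [ZMod.val_add, ZMod.val_one_eq_one_mod]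
      congr 1
      rw [Nat.mod_eq_of_lt (by omega)]
    rw [h2, hgetmod i.val (hval i)]

omit [Fintype V] in
lemma exists_cycle_of_tuple [NeZero k] [DecidableEq V] (hk : 3 ≤ k) {f : ZMod k → V}
    (hfinj : Function.Injective f) (hadj : ∀ i, G.Adj (f i) (f (i+1))) :
    ∃ (u : V) (w : G.Walk u u), w.IsCycle ∧ w.length = k ∧ {e | e ∈ w.edges} = ↑(Ef f) := by
  have hk0 : 0 < k := by omega
  set F : ℕ → V := fun a => f a with hF
  have hFadj : ∀ j, j < k → G.Adj (F j) (F (j+1)) := by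
    intro j hj
    rw [hF]
    simp only
    rw [show ((j+1 : ℕ) : ZMod k) = (j : ZMod k) + 1 by push_cast; ring]
    exact hadj j
  have hFk : F k = F 0 := by rw [hF]; simp
  set w₀ := buildWalk G F k hFadj with hw₀
  set w : G.Walk (F 0) (F 0) := w₀.copy rfl hFk with hw
  have hlen : w.length = k := by rw [hw, length_copy, hw₀, buildWalk_length]
  have hedges : w.edges = (List.range k).map (fun j => s(F j, F (j+1))) := by
    rw [hw, edges_copy, hw₀, buildWalk_edges]
  have hcastinj : ∀ a ∈ List.range k, ∀ b ∈ List.range k, ((a : ZMod k) = (b : ZMod k)) → a = b := by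
    intro a ha b hb hab
    rw [List.mem_range] at ha hb
    have := congrArg ZMod.val hab
    rwa [ZMod.val_cast_of_lt ha, ZMod.val_cast_of_lt hb] at this
  have hecast : ∀ a : ℕ, s(F a, F (a+1)) = s(f (a : ZMod k), f ((a : ZMod k) + 1)) := by
    intro a
    rw [hF]
    simp only
    rw [show ((a+1 : ℕ) : ZMod k) = (a : ZMod k) + 1 by push_cast; ring]
  have hcyc : w.IsCycle := by
    refine ⟨⟨⟨?_⟩, ?_⟩, ?_⟩
    · rw [hedges]
      apply List.Nodup.map_on ?_ List.nodup_range
      intro a ha b hb hab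
      rw [hecast a, hecast b] at hab
      exact hcastinj a ha b hb (edgeMap_injective hk hfinj hab)
    · intro hnil
      have h0 := hlen
      rw [hnil] at h0
      rw [SimpleGraph.Walk.length_nil] at h0
      omega
    · have hsupp : w.support.tail = (List.range k).map (fun a => F (a+1)) := by
        rw [hw, support_copy, hw₀, buildWalk_support, List.range_succ_eq_map,
          List.map_cons, List.tail_cons, List.map_map]
        rfl
      rw [hsupp]
      apply List.Nodup.map_on ?_ List.nodup_range
      intro a ha b hb hab
      rw [List.mem_range] at ha hb
      rw [hF] at hab
      simp only at hab
      have := hfinj hab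
      have h2 := congrArg ZMod.val this
      rw [ZMod.val_natCast, ZMod.val_natCast] at h2
      rcases Nat.lt_or_ge (a+1) k with h | h <;> rcases Nat.lt_or_ge (b+1) k with h' | h'
      · rw [Nat.mod_eq_of_lt h, Nat.mod_eq_of_lt h'] at h2; omega
      · rw [Nat.mod_eq_of_lt h, show b+1 = k by omega, Nat.mod_self] at h2; omega
      · rw [Nat.mod_eq_of_lt h', show a+1 = k by omega, Nat.mod_self] at h2; omega
      · omega
  refine ⟨F 0, w, hcyc, hlen, ?_⟩
  ext e
  simp only [Set.mem_setOf_eq, Finset.mem_coe, mem_Ef]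
  rw [hedges, List.mem_map]
  constructor
  · rintro ⟨a, ha, rfl⟩
    exact ⟨(a : ZMod k), (hecast a).symm ▸ rfl⟩
  · rintro ⟨i, rfl⟩
    refine ⟨i.val, List.mem_range.mpr (ZMod.val_lt i), ?_⟩
    rw [hecast i.val, ZMod.natCast_zmod_val]

end Walks


lemma numCycles_eq [NeZero k] [DecidableEq V] [Fintype V] (hk : 3 ≤ k) (G : SimpleGraph V) :
    numCycles G k = ((tupleSet k G).image Ef).card := by
  have hset : {s : Set (Sym2 V) |
      ∃ (u : V) (w : G.Walk u u), w.IsCycle ∧ w.length = k ∧ s = {e | e ∈ w.edges}}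
      = (fun t : Finset (Sym2 V) => (↑t : Set (Sym2 V))) '' ↑((tupleSet k G).image Ef) := by
    ext s
    simp only [Set.mem_setOf_eq, Set.mem_image, Finset.mem_coe, Finset.mem_image]
    constructor
    · rintro ⟨u, w, hc, hl, rfl⟩
      obtain ⟨f, ⟨hfinj, hadj⟩, hE⟩ := exists_tuple_of_cycle hk hc hl
      exact ⟨Ef f, ⟨f, mem_tupleSet.mpr ⟨hfinj, hadj⟩, rfl⟩, hE.symm⟩
    · rintro ⟨t, ⟨f, hfmem, rfl⟩, rfl⟩
      obtain ⟨hfinj, hadj⟩ := mem_tupleSet.mp hfmem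
      obtain ⟨u, w, hc, hl, hE⟩ := exists_cycle_of_tuple hk hfinj hadj
      exact ⟨u, w, hc, hl, hE.symm⟩
  rw [numCycles, hset, Set.ncard_image_of_injective _ Finset.coe_injective,
    Set.ncard_coe_finset]


/-! ### Moments over `Fin n` -/

section Moments

variable {k n : ℕ} [NeZero k]

lemma Ef_subset_top (hk : 3 ≤ k) {f : ZMod k → Fin n} (hf : Function.Injective f) :
    Ef f ⊆ (⊤ : SimpleGraph (Fin n)).edgeFinset := by
  intro e he
  rw [mem_edgeFinset, edgeSet_top]
  exact Ef_nondiag hk hf he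

lemma succ_ne_self' (hk : 3 ≤ k) (i : ZMod k) : i ≠ i + 1 := by
  intro h
  exact zmod_cast_self_add (i := i) hk (by linear_combination -2 * h)

lemma tupleSet_eq_filter (hk : 3 ≤ k) (G : SimpleGraph (Fin n)) :
    tupleSet k G = (tupleSet k (⊤ : SimpleGraph (Fin n))).filter
      (fun f => (↑(Ef f) : Set (Sym2 (Fin n))) ⊆ G.edgeSet) := by
  ext f
  rw [Finset.mem_filter, mem_tupleSet, mem_tupleSet]
  constructor
  · rintro ⟨hinj, hadj⟩
    refine ⟨⟨hinj, fun i => ?_⟩, ?_⟩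
    · rw [top_adj]; exact (hadj i).ne
    · intro e he
      rw [Finset.mem_coe, mem_Ef] at he
      obtain ⟨i, rfl⟩ := he
      exact (G.mem_edgeSet).mpr (hadj i)
  · rintro ⟨⟨hinj, -⟩, hsub⟩
    refine ⟨hinj, fun i => ?_⟩
    exact (G.mem_edgeSet).mp (hsub (by rw [Finset.mem_coe, mem_Ef]; exact ⟨i, rfl⟩))

lemma card_tupleSet_top (hk : 3 ≤ k) :
    (tupleSet k (⊤ : SimpleGraph (Fin n))).card = n.descFactorial k := by
  have h1 : tupleSet k (⊤ : SimpleGraph (Fin n))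
      = Finset.univ.filter (fun f : ZMod k → Fin n => Function.Injective f) := by
    ext f
    rw [mem_tupleSet, Finset.mem_filter]
    constructor
    · rintro ⟨h, -⟩; exact ⟨Finset.mem_univ f, h⟩
    · rintro ⟨-, h⟩
      refine ⟨h, fun i => ?_⟩
      rw [top_adj]
      intro hc
      exact succ_ne_self' hk i (h hc)
  rw [h1, ← Fintype.card_subtype]
  rw [Fintype.card_congr (Equiv.subtypeInjectiveEquivEmbedding (ZMod k) (Fin n))]
  rw [Fintype.card_embedding_eq, Fintype.card_fin, ZMod.card]

lemma card_tupleSet_chi (hk : 3 ≤ k) (p : ℝ) (G : SimpleGraph (Fin n)) :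
    ((tupleSet k G).card : ℝ)
      = ∑ f ∈ tupleSet k (⊤ : SimpleGraph (Fin n)),
          chi ((↑(Ef f) : Set (Sym2 (Fin n))) ⊆ G.edgeSet) := by
  rw [tupleSet_eq_filter hk G, Finset.card_filter]
  push_cast
  apply Finset.sum_congr rfl
  intro f _
  by_cases h : (↑(Ef f) : Set (Sym2 (Fin n))) ⊆ G.edgeSet <;> simp [h, chi]

lemma erExp_Y (hk : 3 ≤ k) (p : ℝ) :
    ∑ G : SimpleGraph (Fin n), graphWeight n p G * ((tupleSet k G).card : ℝ)
      = (n.descFactorial k : ℝ) * p ^ k := by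
  have h1 : ∀ G : SimpleGraph (Fin n), graphWeight n p G * ((tupleSet k G).card : ℝ)
      = ∑ f ∈ tupleSet k (⊤ : SimpleGraph (Fin n)),
          graphWeight n p G * chi ((↑(Ef f) : Set (Sym2 (Fin n))) ⊆ G.edgeSet) := by
    intro G; rw [card_tupleSet_chi hk p G, Finset.mul_sum]
  rw [Finset.sum_congr rfl (fun G _ => h1 G), Finset.sum_comm]
  have h2 : ∀ f ∈ tupleSet k (⊤ : SimpleGraph (Fin n)),
      ∑ G : SimpleGraph (Fin n), graphWeight n p G
          * chi ((↑(Ef f) : Set (Sym2 (Fin n))) ⊆ G.edgeSet) = p ^ k := by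
    intro f hf
    have hinj := (mem_tupleSet.mp hf).1
    rw [sum_weight_cyl p (Ef f) (Ef_subset_top hk hinj), card_Ef hk hinj]
  rw [Finset.sum_congr rfl h2, Finset.sum_const, ← card_tupleSet_top (n := n) hk, nsmul_eq_mul]

lemma erExp_Y2 (hk : 3 ≤ k) (p : ℝ) :
    ∑ G : SimpleGraph (Fin n), graphWeight n p G * ((tupleSet k G).card : ℝ)^2
      = ∑ f ∈ tupleSet k (⊤ : SimpleGraph (Fin n)),
          ∑ g ∈ tupleSet k (⊤ : SimpleGraph (Fin n)), p ^ (Ef f ∪ Ef g).card := by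
  have h1 : ∀ G : SimpleGraph (Fin n), graphWeight n p G * ((tupleSet k G).card : ℝ)^2
      = ∑ f ∈ tupleSet k (⊤ : SimpleGraph (Fin n)),
          ∑ g ∈ tupleSet k (⊤ : SimpleGraph (Fin n)),
            graphWeight n p G * chi ((↑(Ef f ∪ Ef g) : Set (Sym2 (Fin n))) ⊆ G.edgeSet) := by
    intro G
    rw [pow_two, card_tupleSet_chi hk p G, Finset.sum_mul_sum, Finset.mul_sum]
    apply Finset.sum_congr rfl
    intro f _
    rw [Finset.mul_sum]
    apply Finset.sum_congr rfl
    intro g _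
    rw [← mul_assoc, mul_assoc (graphWeight n p G), chi_mul_chi]
    have : ((↑(Ef f) : Set (Sym2 (Fin n))) ⊆ G.edgeSet ∧ (↑(Ef g) : Set (Sym2 (Fin n))) ⊆ G.edgeSet)
        ↔ ((↑(Ef f ∪ Ef g) : Set (Sym2 (Fin n))) ⊆ G.edgeSet) := by
      rw [Finset.coe_union, Set.union_subset_iff]
    unfold chi
    simp only [this]
  rw [Finset.sum_congr rfl (fun G _ => h1 G), Finset.sum_comm]
  apply Finset.sum_congr rfl
  intro f hf
  rw [Finset.sum_comm]
  apply Finset.sum_congr rfl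
  intro g hg
  have hif := (mem_tupleSet.mp hf).1
  have hig := (mem_tupleSet.mp hg).1
  exact sum_weight_cyl p (Ef f ∪ Ef g)
    (Finset.union_subset (Ef_subset_top hk hif) (Ef_subset_top hk hig))

end Moments

/-! ### Variance bound -/

section VarBound

variable {k n : ℕ} [NeZero k]

lemma endpoint_mem_image (hk : 3 ≤ k) {f g : ZMod k → Fin n} {i : ZMod k} {e : Sym2 (Fin n)}
    (hef : e ∈ Ef f) (heg : e = s(g i, g (i+1))) : g i ∈ Finset.image f Finset.univ := by
  rw [mem_Ef] at hef
  obtain ⟨j, hj⟩ := hef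
  rw [heg] at hj
  rw [Sym2.eq_iff] at hj
  rcases hj with ⟨h1, -⟩ | ⟨h1, -⟩ <;>
    exact Finset.mem_image.mpr ⟨_, Finset.mem_univ _, h1.symm⟩

lemma card_inter_Ef_le (hk : 3 ≤ k) {f g : ZMod k → Fin n} (hg : Function.Injective g) :
    (Ef f ∩ Ef g).card
      ≤ (Finset.univ.filter (fun i : ZMod k => g i ∈ Finset.image f Finset.univ)).card := by
  apply Finset.card_le_card_of_injOn
    (fun e => if h : ∃ i, e = s(g i, g (i+1)) then h.choose else 0)
  · intro e he
    rw [Finset.mem_coe, Finset.mem_inter] at he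
    have hex : ∃ i, e = s(g i, g (i+1)) := mem_Ef.mp he.2
    simp only [dif_pos hex]
    rw [Finset.mem_coe, Finset.mem_filter]
    exact ⟨Finset.mem_univ _, endpoint_mem_image hk he.1 hex.choose_spec⟩
  · intro e he e' he' hee
    rw [Finset.coe_inter, Set.mem_inter_iff] at he he'
    have hex : ∃ i, e = s(g i, g (i+1)) := mem_Ef.mp he.2
    have hex' : ∃ i, e' = s(g i, g (i+1)) := mem_Ef.mp he'.2
    have hee' : (if h : ∃ i, e = s(g i, g (i+1)) then h.choose else 0)
        = (if h : ∃ i, e' = s(g i, g (i+1)) then h.choose else 0) := hee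
    rw [dif_pos hex, dif_pos hex'] at hee'
    rw [hex.choose_spec, hex'.choose_spec, hee']

lemma inter_Ef_eq_empty (hk : 3 ≤ k) {f g : ZMod k → Fin n}
    (h : Finset.univ.filter (fun i : ZMod k => g i ∈ Finset.image f Finset.univ) = ∅) :
    Ef f ∩ Ef g = ∅ := by
  rw [Finset.eq_empty_iff_forall_notMem]
  intro e he
  rw [Finset.mem_inter] at he
  have hex : ∃ i, e = s(g i, g (i+1)) := mem_Ef.mp he.2
  obtain ⟨i, hi⟩ := hex
  have : i ∈ Finset.univ.filter (fun i : ZMod k => g i ∈ Finset.image f Finset.univ) := by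
    rw [Finset.mem_filter]
    exact ⟨Finset.mem_univ _, endpoint_mem_image hk he.1 hi⟩
  rw [h] at this
  exact Finset.notMem_empty _ this

lemma card_union_Ef (hk : 3 ≤ k) {f g : ZMod k → Fin n} (hf : Function.Injective f)
    (hg : Function.Injective g) :
    (Ef f ∪ Ef g).card = 2 * k - (Ef f ∩ Ef g).card := by
  have h := Finset.card_union_add_card_inter (Ef f) (Ef g)
  rw [card_Ef hk hf, card_Ef hk hg] at h
  omega

lemma card_filter_key_le (f : ZMod k → Fin n) (hfinj : Function.Injective f)
    (I : Finset (ZMod k)) :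
    ((tupleSet k (⊤ : SimpleGraph (Fin n))).filter
        (fun g => Finset.univ.filter (fun i => g i ∈ Finset.image f Finset.univ) = I)).card
      ≤ k ^ I.card * n ^ (k - I.card) := by
  classical
  set Rf := Finset.image f Finset.univ with hRf
  have hRfcard : Rf.card = k := by
    rw [hRf, Finset.card_image_of_injective _ hfinj, Finset.card_univ, ZMod.card]
  set S := (tupleSet k (⊤ : SimpleGraph (Fin n))).filter
      (fun g => Finset.univ.filter (fun i => g i ∈ Rf) = I) with hS
  have hmem : ∀ g ∈ S, ∀ i : ZMod k, i ∈ I → g i ∈ Rf := by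
    intro g hg i hi
    rw [hS, Finset.mem_filter] at hg
    rw [← hg.2, Finset.mem_filter] at hi
    exact hi.2
  have hsub : S ⊆ Finset.univ.filter (fun g : ZMod k → Fin n => ∀ i ∈ I, g i ∈ Rf) := by
    intro g hg
    rw [Finset.mem_filter]
    exact ⟨Finset.mem_univ _, hmem g hg⟩
  have h1 : S.card ≤ Fintype.card {g : ZMod k → Fin n // ∀ i ∈ I, g i ∈ Rf} := by
    rw [Fintype.card_subtype]
    exact Finset.card_le_card hsub
  have h2 : Fintype.card {g : ZMod k → Fin n // ∀ i ∈ I, g i ∈ Rf}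
      ≤ Fintype.card ((({x // x ∈ I}) → {y // y ∈ Rf}) × (({x // x ∈ Iᶜ}) → Fin n)) := by
    apply Fintype.card_le_of_injective
      (fun g => (fun i => ⟨g.1 i.1, g.2 i.1 i.2⟩, fun i => g.1 i.1))
    intro g g' h
    rw [Prod.mk.injEq] at h
    apply Subtype.ext
    funext i
    by_cases hi : i ∈ I
    · exact congrArg Subtype.val (congrFun h.1 ⟨i, hi⟩)
    · exact congrFun h.2 ⟨i, Finset.mem_compl.mpr hi⟩
  refine h1.trans (h2.trans (le_of_eq ?_))
  rw [Fintype.card_prod, Fintype.card_fun, Fintype.card_fun, Fintype.card_coe,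
    Fintype.card_coe, Fintype.card_fin, hRfcard]
  congr 1
  simp [Finset.card_compl, ZMod.card]

lemma inner_var_bound (hk : 3 ≤ k) {p : ℝ} (hp0 : 0 ≤ p) (hp1 : p ≤ 1)
    (hm : 1 ≤ (n:ℝ) * p) {f : ZMod k → Fin n}
    (hf : f ∈ tupleSet k (⊤ : SimpleGraph (Fin n))) :
    ∑ g ∈ tupleSet k (⊤ : SimpleGraph (Fin n)), (p ^ (Ef f ∪ Ef g).card - p ^ (2*k))
      ≤ 2^k * (k:ℝ)^k * ((n:ℝ)*p)^(k-1) * p^k := by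
  classical
  have hnp0 : (0:ℝ) ≤ (n:ℝ)*p := le_trans zero_le_one hm
  set T := tupleSet k (⊤ : SimpleGraph (Fin n)) with hT
  have hfinj : Function.Injective f := (mem_tupleSet.mp hf).1
  set key : (ZMod k → Fin n) → Finset (ZMod k) :=
    fun g => Finset.univ.filter (fun i => g i ∈ Finset.image f Finset.univ) with hkey
  have hstep1 : ∀ g ∈ T, p ^ (Ef f ∪ Ef g).card - p ^ (2*k)
      ≤ if key g = ∅ then 0 else p ^ (2*k - (key g).card) := by
    intro g hg
    have hginj : Function.Injective g := (mem_tupleSet.mp hg).1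
    by_cases hkg : key g = ∅
    · rw [if_pos hkg]
      have hint : Ef f ∩ Ef g = ∅ := inter_Ef_eq_empty hk hkg
      have hu : (Ef f ∪ Ef g).card = 2*k := by
        rw [card_union_Ef hk hfinj hginj, hint, Finset.card_empty]
        omega
      rw [hu]
      simp
    · rw [if_neg hkg]
      have h2 : 2*k - (key g).card ≤ (Ef f ∪ Ef g).card := by
        have ha : (Ef f ∩ Ef g).card ≤ (key g).card := card_inter_Ef_le hk (f := f) hginj
        have hb := card_union_Ef hk hfinj hginj
        omega
      have h3 := pow_le_pow_of_le_one hp0 hp1 h2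
      have hnn : (0:ℝ) ≤ p ^ (2*k) := pow_nonneg hp0 _
      linarith
  refine (Finset.sum_le_sum hstep1).trans ?_
  have hrw : ∑ g ∈ T, (if key g = ∅ then 0 else p ^ (2*k - (key g).card))
      = ∑ g ∈ T.filter (fun g => ¬ (key g = ∅)), p ^ (2*k - (key g).card) := by
    rw [Finset.sum_filter]
    apply Finset.sum_congr rfl
    intro g _
    by_cases hkg : key g = ∅ <;> simp [hkg]
  rw [hrw]
  set S := T.filter (fun g => ¬ (key g = ∅)) with hSdef
  have hmaps : ∀ g ∈ S, key g ∈ (Finset.univ : Finset (ZMod k)).powerset.filter (· ≠ ∅) := by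
    intro g hg
    rw [hSdef, Finset.mem_filter] at hg
    rw [Finset.mem_filter, Finset.mem_powerset]
    exact ⟨Finset.subset_univ _, hg.2⟩
  rw [← Finset.sum_fiberwise_of_maps_to hmaps (fun g => p ^ (2*k - (key g).card))]
  have hfiber : ∀ I ∈ (Finset.univ : Finset (ZMod k)).powerset.filter (· ≠ ∅),
      ∑ g ∈ S.filter (fun g => key g = I), p ^ (2*k - (key g).card)
        ≤ (k:ℝ)^k * ((n:ℝ)*p)^(k-1) * p^k := by
    intro I hI
    rw [Finset.mem_filter, Finset.mem_powerset] at hI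
    have hIne : 1 ≤ I.card := Finset.card_pos.mpr (Finset.nonempty_iff_ne_empty.mpr hI.2)
    have hIle : I.card ≤ k := by
      have := Finset.card_le_card hI.1
      rwa [Finset.card_univ, ZMod.card] at this
    have hterm : ∀ g ∈ S.filter (fun g => key g = I),
        p ^ (2*k - (key g).card) = p ^ (2*k - I.card) := by
      intro g hg
      rw [(Finset.mem_filter.mp hg).2]
    rw [Finset.sum_congr rfl hterm, Finset.sum_const, nsmul_eq_mul]
    have hcard : (S.filter (fun g => key g = I)).card ≤ k ^ I.card * n ^ (k - I.card) := by
      refine le_trans (Finset.card_le_card ?_) (card_filter_key_le f hfinj I)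
      intro g hg
      rw [Finset.mem_filter] at hg ⊢
      have hgS := hg.1
      rw [hSdef, Finset.mem_filter] at hgS
      exact ⟨hgS.1, hg.2⟩
    have hp2k : (0:ℝ) ≤ p ^ (2*k - I.card) := pow_nonneg hp0 _
    have hc : ((S.filter (fun g => key g = I)).card : ℝ)
        ≤ (k:ℝ)^I.card * (n:ℝ)^(k - I.card) := by exact_mod_cast hcard
    refine le_trans (mul_le_mul_of_nonneg_right hc hp2k) ?_
    have hsplit : (n:ℝ)^(k - I.card) * p ^ (2*k - I.card)
        = ((n:ℝ)*p)^(k - I.card) * p ^ k := by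
      rw [mul_pow, show 2*k - I.card = (k - I.card) + k by omega, pow_add]
      ring
    have hkk : (k:ℝ)^I.card ≤ (k:ℝ)^k := by
      apply pow_le_pow_right₀ _ hIle
      exact_mod_cast Nat.one_le_iff_ne_zero.mpr (by omega)
    have hmm : ((n:ℝ)*p)^(k - I.card) ≤ ((n:ℝ)*p)^(k-1) :=
      pow_le_pow_right₀ hm (by omega)
    calc (k:ℝ)^I.card * (n:ℝ)^(k - I.card) * p ^ (2*k - I.card)
        = (k:ℝ)^I.card * (((n:ℝ)*p)^(k - I.card) * p^k) := by rw [mul_assoc, hsplit]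
      _ ≤ (k:ℝ)^k * (((n:ℝ)*p)^(k-1) * p^k) := by
          apply mul_le_mul hkk ?_ ?_ (pow_nonneg (by positivity) k)
          · exact mul_le_mul_of_nonneg_right hmm (pow_nonneg hp0 k)
          · exact mul_nonneg (pow_nonneg hnp0 _) (pow_nonneg hp0 _)
      _ = (k:ℝ)^k * ((n:ℝ)*p)^(k-1) * p^k := by ring
  refine (Finset.sum_le_sum hfiber).trans ?_
  rw [Finset.sum_const, nsmul_eq_mul]
  have hcardfil : (((Finset.univ : Finset (ZMod k)).powerset.filter (· ≠ ∅)).card : ℝ)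
      ≤ 2^k := by
    have h1 : ((Finset.univ : Finset (ZMod k)).powerset.filter (· ≠ ∅)).card
        ≤ (Finset.univ : Finset (ZMod k)).powerset.card :=
      Finset.card_le_card (Finset.filter_subset _ _)
    have h2 : (Finset.univ : Finset (ZMod k)).powerset.card = 2^k := by
      rw [Finset.card_powerset, Finset.card_univ, ZMod.card]
    calc (((Finset.univ : Finset (ZMod k)).powerset.filter (· ≠ ∅)).card : ℝ)
        ≤ ((2^k : ℕ) : ℝ) := by exact_mod_cast h1.trans (le_of_eq h2)
      _ = 2^k := by push_cast; ring
  have hrhs : (0:ℝ) ≤ (k:ℝ)^k * ((n:ℝ)*p)^(k-1) * p^k := by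
    apply mul_nonneg (mul_nonneg (pow_nonneg (by positivity) _) (pow_nonneg hnp0 _)) (pow_nonneg hp0 _)
  calc _ ≤ (2:ℝ)^k * ((k:ℝ)^k * ((n:ℝ)*p)^(k-1) * p^k) :=
        mul_le_mul_of_nonneg_right hcardfil hrhs
    _ = 2^k * (k:ℝ)^k * ((n:ℝ)*p)^(k-1) * p^k := by ring

lemma var_sum_bound (hk : 3 ≤ k) {p : ℝ} (hp0 : 0 ≤ p) (hp1 : p ≤ 1)
    (hm : 1 ≤ (n:ℝ) * p) :
    ∑ f ∈ tupleSet k (⊤ : SimpleGraph (Fin n)),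
      ∑ g ∈ tupleSet k (⊤ : SimpleGraph (Fin n)), (p ^ (Ef f ∪ Ef g).card - p ^ (2*k))
      ≤ 2^k * (k:ℝ)^k * ((n:ℝ)*p)^(2*k-1) := by
  have hnp0 : (0:ℝ) ≤ (n:ℝ)*p := le_trans zero_le_one hm
  refine (Finset.sum_le_sum (fun f hf => inner_var_bound hk hp0 hp1 hm hf)).trans ?_
  rw [Finset.sum_const, nsmul_eq_mul, card_tupleSet_top hk]
  have hd : ((n.descFactorial k : ℕ):ℝ) ≤ (n:ℝ)^k := by
    exact_mod_cast Nat.descFactorial_le_pow n k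
  have hb : (0:ℝ) ≤ 2^k * (k:ℝ)^k * ((n:ℝ)*p)^(k-1) * p^k := by
    apply mul_nonneg (mul_nonneg (mul_nonneg (by positivity) (by positivity)) (pow_nonneg hnp0 _))
      (pow_nonneg hp0 _)
  refine (mul_le_mul_of_nonneg_right hd hb).trans (le_of_eq ?_)
  have hnk : (n:ℝ)^k * p^k = ((n:ℝ)*p)^k := (mul_pow _ _ _).symm
  have hpow : ((n:ℝ)*p)^(k-1) * ((n:ℝ)*p)^k = ((n:ℝ)*p)^(2*k-1) := by
    rw [← pow_add]
    congr 1
    omega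
  calc (n:ℝ)^k * (2^k * (k:ℝ)^k * ((n:ℝ)*p)^(k-1) * p^k)
      = 2^k * (k:ℝ)^k * (((n:ℝ)*p)^(k-1) * ((n:ℝ)^k * p^k)) := by ring
    _ = 2^k * (k:ℝ)^k * ((n:ℝ)*p)^(2*k-1) := by rw [hnk, hpow]


end VarBound

/-! ### Probability basics and Chebyshev -/

section Prob

variable {n : ℕ} {p : ℝ}

lemma sum_weight_one (n : ℕ) (p : ℝ) :
    ∑ G : SimpleGraph (Fin n), graphWeight n p G = 1 := by
  have h := sum_weight_cyl (n := n) p ∅ (Finset.empty_subset _)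
  simp only [Finset.coe_empty, Set.empty_subset, chi_of, mul_one, Finset.card_empty,
    pow_zero] at h
  exact h

lemma erProb_add_compl (A : Set (SimpleGraph (Fin n))) :
    erProb n p A + erProb n p Aᶜ = 1 := by
  rw [erProb, erProb, ← Finset.sum_add_distrib]
  rw [← sum_weight_one n p]
  apply Finset.sum_congr rfl
  intro G _
  have := congrFun (Set.indicator_self_add_compl A (graphWeight n p)) G
  simpa using this

lemma erProb_le_one (hp0 : 0 ≤ p) (hp1 : p ≤ 1) (A : Set (SimpleGraph (Fin n))) :
    erProb n p A ≤ 1 := by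
  rw [erProb, ← sum_weight_one n p]
  apply Finset.sum_le_sum
  intro G _
  exact Set.indicator_le_self' (fun G _ => graphWeight_nonneg hp0 hp1 G) G

lemma erProb_nonneg (hp0 : 0 ≤ p) (hp1 : p ≤ 1) (A : Set (SimpleGraph (Fin n))) :
    0 ≤ erProb n p A := by
  apply Finset.sum_nonneg
  intro G _
  exact Set.indicator_nonneg (fun G _ => graphWeight_nonneg hp0 hp1 G) G

lemma chebyshev (hp0 : 0 ≤ p) (hp1 : p ≤ 1) (X : SimpleGraph (Fin n) → ℝ) (μ c : ℝ)
    (hc : 0 < c) :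
    erProb n p {G | ¬ |X G - μ| ≤ c}
      ≤ (∑ G : SimpleGraph (Fin n), graphWeight n p G * (X G - μ)^2) / c^2 := by
  rw [erProb, Finset.sum_div]
  apply Finset.sum_le_sum
  intro G _
  rw [Set.indicator_apply]
  have hw := graphWeight_nonneg hp0 hp1 G
  split_ifs with hG
  · rw [Set.mem_setOf_eq, not_le] at hG
    have h1 : c^2 ≤ (X G - μ)^2 := by
      have := abs_nonneg (X G - μ)
      calc c^2 ≤ |X G - μ|^2 := by nlinarith
        _ = (X G - μ)^2 := sq_abs _
    rw [mul_div_assoc]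
    apply le_mul_of_one_le_right hw
    rw [le_div_iff₀ (by positivity)]
    nlinarith [h1]
  · positivity

end Prob

/-! ### The main estimate for a single `n` -/

section Main

lemma numCycles_mul {k n : ℕ} [NeZero k] (hk : 3 ≤ k) (G : SimpleGraph (Fin n)) :
    2 * k * numCycles G k = (tupleSet k G).card := by
  rw [numCycles_eq hk G, ← card_tupleSet_eq hk G]

lemma main_bound (k n : ℕ) (hk : 3 ≤ k) (p : ℝ) (hp0 : 0 ≤ p) (hp1 : p ≤ 1)
    (hm : 1 ≤ (n:ℝ) * p) (hn : 2 * k ≤ n) (A : ℝ) (hA : 0 < A) :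
    1 - ((8:ℝ)^k * (k:ℝ)^k / A^2) / ((n:ℝ) * p)
        ≤ erProb n p {G | |(numCycles G k : ℝ) - expCycles n p k| ≤ A * expCycles n p k}
      ∧ erProb n p {G | |(numCycles G k : ℝ) - expCycles n p k| ≤ A * expCycles n p k} ≤ 1 := by
  classical
  haveI : NeZero k := ⟨by omega⟩
  have hk0 : (0:ℝ) < k := by exact_mod_cast (by omega : 0 < k)
  have hmpos : (0:ℝ) < (n:ℝ) * p := lt_of_lt_of_le one_pos hm
  have hppos : 0 < p := by
    rcases lt_or_ge 0 p with h | h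
    · exact h
    · exfalso
      have : (n:ℝ) * p ≤ 0 := mul_nonpos_of_nonneg_of_nonpos (Nat.cast_nonneg n) h
      linarith
  set T := tupleSet k (⊤ : SimpleGraph (Fin n)) with hT
  set w : SimpleGraph (Fin n) → ℝ := graphWeight n p with hw
  set Yr : SimpleGraph (Fin n) → ℝ := fun G => ((tupleSet k G).card : ℝ) with hYr
  set D : ℝ := (n.descFactorial k : ℝ) with hD
  set EY : ℝ := D * p ^ k with hEY
  -- positivity of EY
  have hDpos : 0 < D := by
    rw [hD]
    have : n.descFactorial k ≠ 0 := by
      rw [Ne, Nat.descFactorial_eq_zero_iff_lt]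
      omega
    exact_mod_cast Nat.pos_of_ne_zero this
  have hEYpos : 0 < EY := by
    rw [hEY]; positivity
  -- expCycles = EY / (2k)
  have hEX : expCycles n p k = EY / (2 * k) := by
    rw [expCycles, hEY, hD, Nat.descFactorial_eq_factorial_mul_choose]
    have hfac : (k:ℝ) * (Nat.factorial (k-1) : ℝ) = (Nat.factorial k : ℝ) := by
      exact_mod_cast congrArg (Nat.cast : ℕ → ℝ) (Nat.mul_factorial_pred (by omega))
    push_cast
    rw [← hfac]
    field_simp
  have hEXpos : 0 < expCycles n p k := by
    rw [hEX]; positivity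
  -- numCycles in terms of Yr
  have hXY : ∀ G : SimpleGraph (Fin n), (numCycles G k : ℝ) = Yr G / (2 * k) := by
    intro G
    have h := numCycles_mul (n := n) hk G
    have hcast : (2 * k : ℝ) * (numCycles G k : ℝ) = Yr G := by
      show (2 * k : ℝ) * (numCycles G k : ℝ) = ((tupleSet k G).card : ℝ)
      exact_mod_cast h
    rw [eq_div_iff (by positivity : (2*(k:ℝ)) ≠ 0)]
    linarith
  -- first moment
  have hEY1 : ∑ G : SimpleGraph (Fin n), w G * Yr G = EY := erExp_Y hk p
  have hw1 : ∑ G : SimpleGraph (Fin n), w G = 1 := sum_weight_one n p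
  -- variance identity
  have hvar : ∑ G : SimpleGraph (Fin n), w G * (Yr G - EY)^2
      = (∑ G : SimpleGraph (Fin n), w G * (Yr G)^2) - EY^2 := by
    have hexp : ∀ G : SimpleGraph (Fin n), w G * (Yr G - EY)^2
        = w G * (Yr G)^2 - 2*EY*(w G * Yr G) + EY^2 * w G := by intro G; ring
    rw [Finset.sum_congr rfl (fun G _ => hexp G)]
    rw [Finset.sum_add_distrib, Finset.sum_sub_distrib, ← Finset.mul_sum, ← Finset.mul_sum,
      hEY1, hw1]
    ring
  -- second moment and variance bound
  have hvar2 : ∑ G : SimpleGraph (Fin n), w G * (Yr G)^2 - EY^2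
      = ∑ f ∈ T, ∑ g ∈ T, (p ^ (Ef f ∪ Ef g).card - p ^ (2*k)) := by
    rw [erExp_Y2 hk p]
    have hins : ∀ f ∈ T, ∑ g ∈ T, (p ^ (Ef f ∪ Ef g).card - p^(2*k))
        = (∑ g ∈ T, p ^ (Ef f ∪ Ef g).card) - (T.card : ℝ) * p^(2*k) := by
      intro f _
      rw [Finset.sum_sub_distrib, Finset.sum_const, nsmul_eq_mul]
    rw [Finset.sum_congr rfl hins, Finset.sum_sub_distrib, Finset.sum_const, nsmul_eq_mul]
    congr 1
    rw [hT, card_tupleSet_top hk, hEY, hD, show 2*k = k+k by ring, pow_add]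
    ring
  have hvarle : ∑ G : SimpleGraph (Fin n), w G * (Yr G - EY)^2
      ≤ 2^k * (k:ℝ)^k * ((n:ℝ)*p)^(2*k-1) := by
    rw [hvar, hvar2]
    exact var_sum_bound hk hp0 hp1 hm
  -- Chebyshev
  set Bad : Set (SimpleGraph (Fin n)) :=
    {G | ¬ |(numCycles G k : ℝ) - expCycles n p k| ≤ A * expCycles n p k} with hBad
  have hcheb : erProb n p Bad
      ≤ (∑ G : SimpleGraph (Fin n), w G * ((numCycles G k : ℝ) - expCycles n p k)^2)
          / (A * expCycles n p k)^2 :=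
    chebyshev hp0 hp1 _ _ _ (by positivity)
  have hsum_eq : ∑ G : SimpleGraph (Fin n), w G * ((numCycles G k : ℝ) - expCycles n p k)^2
      = (∑ G : SimpleGraph (Fin n), w G * (Yr G - EY)^2) / (2*k)^2 := by
    rw [Finset.sum_div]
    apply Finset.sum_congr rfl
    intro G _
    rw [hXY G, hEX]
    field_simp
  have hbad : erProb n p Bad ≤ ((8:ℝ)^k * (k:ℝ)^k / A^2) / ((n:ℝ) * p) := by
    refine hcheb.trans ?_
    rw [hsum_eq, hEX]
    have hden : (A * (EY / (2*k)))^2 = A^2 * EY^2 / (2*k)^2 := by ring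
    rw [hden]
    have hq : ∀ S : ℝ, S/(2*(k:ℝ))^2 / (A^2*EY^2/(2*(k:ℝ))^2) = S/(A^2*EY^2) := by
      intro S
      have hc : ((2*(k:ℝ))^2) ≠ 0 := by positivity
      have hb : A^2*EY^2 ≠ 0 := by positivity
      field_simp
    rw [hq]
    -- now : (∑ ...) / (A^2 * EY^2) ≤ ...
    have hEYlb : ((n:ℝ)*p)^k / 2^k ≤ EY := by
      have h1 : ((n - k : ℕ) : ℝ)^k ≤ D := by
        rw [hD]
        have ha := Nat.pow_sub_le_descFactorial n k
        have h0 : (n - k)^k ≤ (n + 1 - k)^k := Nat.pow_le_pow_left (by omega) k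
        exact_mod_cast h0.trans ha
      have h2 : ((n:ℝ)/2)^k ≤ ((n - k : ℕ) : ℝ)^k := by
        apply pow_le_pow_left₀ (by positivity)
        rw [Nat.cast_sub (by omega)]
        have : (2*k : ℝ) ≤ (n:ℝ) := by exact_mod_cast hn
        linarith
      have h3 : ((n:ℝ)*p)^k / 2^k = ((n:ℝ)/2)^k * p^k := by
        rw [div_pow, mul_pow]
        ring
      rw [h3, hEY]
      exact mul_le_mul_of_nonneg_right (h2.trans h1) (pow_nonneg hp0 k)
    rw [div_le_div_iff₀ (by positivity) (by positivity)]
    have hEY2 : ((n:ℝ)*p)^(2*k) / 4^k ≤ EY^2 := by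
      have := mul_le_mul hEYlb hEYlb (by positivity) (le_of_lt hEYpos)
      calc ((n:ℝ)*p)^(2*k) / 4^k = (((n:ℝ)*p)^k / 2^k) * (((n:ℝ)*p)^k / 2^k) := by
            rw [show 2*k = k + k by ring, pow_add]
            rw [show (4:ℝ)^k = 2^k * 2^k by rw [show (4:ℝ) = 2^2 by norm_num, ← pow_mul]; rw [← pow_add]; congr 1; omega]
            ring
        _ ≤ EY * EY := this
        _ = EY^2 := by ring
    have hvb := hvarle
    have hmk : ((n:ℝ)*p)^(2*k-1) * ((n:ℝ)*p) = ((n:ℝ)*p)^(2*k) := by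
      rw [← pow_succ]
      congr 1
      omega
    calc (∑ G : SimpleGraph (Fin n), w G * (Yr G - EY)^2) * ((n:ℝ) * p)
        ≤ (2^k * (k:ℝ)^k * ((n:ℝ)*p)^(2*k-1)) * ((n:ℝ)*p) :=
          mul_le_mul_of_nonneg_right hvarle (le_of_lt hmpos)
      _ = 2^k * (k:ℝ)^k * ((n:ℝ)*p)^(2*k) := by rw [mul_assoc, hmk]
      _ = (8:ℝ)^k * (k:ℝ)^k / A^2 * (A^2 * (((n:ℝ)*p)^(2*k) / 4^k)) := by
          rw [show (8:ℝ)^k = 2^k * 4^k by rw [← mul_pow]; norm_num]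
          field_simp
      _ ≤ (8:ℝ)^k * (k:ℝ)^k / A^2 * (A^2 * EY^2) := by
          apply mul_le_mul_of_nonneg_left (mul_le_mul_of_nonneg_left hEY2 (by positivity))
            (by positivity)
  -- conclude
  have hcompl := erProb_add_compl (p := p) Badᶜ
  have hBc : Badᶜᶜ = Bad := compl_compl Bad
  have hgoodset : Badᶜ = {G : SimpleGraph (Fin n) |
      |(numCycles G k : ℝ) - expCycles n p k| ≤ A * expCycles n p k} := by
    rw [hBad]
    ext G
    simp [Set.mem_setOf_eq]
  constructor
  · rw [← hgoodset]
    rw [hBc] at hcompl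
    have : erProb n p Badᶜ = 1 - erProb n p Bad := by linarith
    rw [this]
    linarith
  · rw [← hgoodset]
    exact erProb_le_one hp0 hp1 _

end Main

end Aux

open Filter in
theorem stmt13 (k : ℕ) (hk : 3 ≤ k) (p : ℕ → ℝ) (hp : ∀ n, p n ∈ Set.Icc (0 : ℝ) 1)
    (h : Tendsto (fun n : ℕ => (n : ℝ) * p n) atTop atTop) (A : ℝ) (hA : 0 < A) :
    Tendsto (fun n => erProb n (p n)
        {G | |(numCycles G k : ℝ) - expCycles n (p n) k| ≤ A * expCycles n (p n) k})
      atTop (nhds 1) := by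
  have hml : Tendsto (fun n : ℕ => 1 - ((8:ℝ)^k * (k:ℝ)^k / A^2) / ((n:ℝ) * p n)) atTop
      (nhds 1) := by
    have h0 : Tendsto (fun n : ℕ => ((8:ℝ)^k * (k:ℝ)^k / A^2) / ((n:ℝ) * p n)) atTop
        (nhds 0) := Tendsto.div_atTop tendsto_const_nhds h
    have := (tendsto_const_nhds (x := (1:ℝ)) (f := atTop (α := ℕ))).sub h0
    simpa using this
  apply tendsto_of_tendsto_of_tendsto_of_le_of_le' hml tendsto_const_nhds
  · filter_upwards [h.eventually_ge_atTop 1, eventually_ge_atTop (2*k)] with n hn1 hn2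
    exact (main_bound k n hk (p n) (hp n).1 (hp n).2 hn1 hn2 A hA).1
  · filter_upwards [h.eventually_ge_atTop 1, eventually_ge_atTop (2*k)] with n hn1 hn2
    exact (main_bound k n hk (p n) (hp n).1 (hp n).2 hn1 hn2 A hA).2

end SEP
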